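/- Let X, Θ, Y be separable real Hilbert spaces, U = X × Θ with norm ‖(x,θ)‖_U² = ‖x‖_X² + ‖θ‖_Θ², and F : U → Y Lipschitz with constant L. Let H be the class of all maps E : U → Y that are Lipschitz with constant at most R and satisfy ‖E(0)‖_Y ≤ B. Fix a deployment law ν_dep, a Borel probability measure on U with finite second moment, and define J(ν) = inf_{E∈H} R_ν(E) + c(ν,ν_dep) · W₂(ν,ν_dep). Then for every Borel probability measure ν on U with finite second moment, 0 ≤ J(ν) − J(ν_dep) ≤ 2 · c(ν,ν_dep) · W₂(ν,ν_dep). -/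

import Mathlib

open MeasureTheory
open scoped ENNReal NNReal

noncomputable section

/-- The Hilbert norm on the product `U = X × Θ`: `‖(x, θ)‖_U = √(‖x‖² + ‖θ‖²)`. -/
def nU {X Θ : Type*} [NormedAddCommGroup X] [NormedAddCommGroup Θ] (u : X × Θ) : ℝ :=
  Real.sqrt (‖u.1‖ ^ 2 + ‖u.2‖ ^ 2)

/-- The 2-Wasserstein distance associated with a cost function `d`: the infimum over all
couplings `γ` of `μ` and `μ'` (i.e. probability measures on the product whose marginals are
`μ` and `μ'`) of `(∫ d(u,v)² dγ)^{1/2}`. -/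
def W2 {α : Type*} [MeasurableSpace α] (d : α → α → ℝ) (μ μ' : Measure α) : ℝ :=
  sInf { r : ℝ | ∃ γ : Measure (α × α), IsProbabilityMeasure γ ∧
      γ.map Prod.fst = μ ∧ γ.map Prod.snd = μ' ∧
      r = Real.sqrt (∫ p, d p.1 p.2 ^ 2 ∂γ) }

/-- The squared-error risk `R_ν(E) = ∫ ‖F(u) - E(u)‖² dν(u)`. -/
def risk {X Θ Y : Type*} [NormedAddCommGroup X] [NormedAddCommGroup Θ] [NormedAddCommGroup Y]
    [MeasurableSpace X] [MeasurableSpace Θ] (F E : X × Θ → Y) (ν : Measure (X × Θ)) : ℝ :=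
  ∫ u, ‖F u - E u‖ ^ 2 ∂ν

/-- The hypothesis class `H`: all maps `E : U → Y` that are Lipschitz with constant at most
`R₀` (with respect to the Hilbert product norm on `U`) and satisfy `‖E 0‖ ≤ B`. -/
def Hclass {X Θ Y : Type*} [NormedAddCommGroup X] [NormedAddCommGroup Θ] [NormedAddCommGroup Y]
    (R₀ B : ℝ) : Set (X × Θ → Y) :=
  { E | (∀ u v, ‖E u - E v‖ ≤ R₀ * nU (u - v)) ∧ ‖E 0‖ ≤ B }

/-- The constant `c(ν,ν') = C₁² √(2(∫‖u‖_U² dν + ∫‖u‖_U² dν')) + 2 C₁ C₂`, where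
`C₁ = L + R₀` and `C₂ = ‖F 0‖ + B`. -/
def cShift {X Θ Y : Type*} [NormedAddCommGroup X] [NormedAddCommGroup Θ] [NormedAddCommGroup Y]
    [MeasurableSpace X] [MeasurableSpace Θ] (L R₀ B : ℝ) (F : X × Θ → Y)
    (ν ν' : Measure (X × Θ)) : ℝ :=
  (L + R₀) ^ 2 * Real.sqrt (2 * ((∫ u, nU u ^ 2 ∂ν) + ∫ u, nU u ^ 2 ∂ν'))
    + 2 * (L + R₀) * (‖F 0‖ + B)

/-- The bound objective `J(ν) = inf_{E ∈ H} R_ν(E) + c(ν, ν_dep) W₂(ν, ν_dep)`, where the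
Wasserstein distance on `U = X × Θ` is taken with respect to the Hilbert product norm. -/
def Jobj {X Θ Y : Type*} [NormedAddCommGroup X] [NormedAddCommGroup Θ] [NormedAddCommGroup Y]
    [MeasurableSpace X] [MeasurableSpace Θ] (L R₀ B : ℝ) (F : X × Θ → Y)
    (νdep ν : Measure (X × Θ)) : ℝ :=
  sInf ((fun E => risk F E ν) '' Hclass R₀ B)
    + cShift L R₀ B F ν νdep * W2 (fun u v => nU (u - v)) ν νdep

/-!
For a fixed emulator `E` the residual `r u = ‖F u - E u‖` is `C₁`-Lipschitz for the product norm
and bounded by `C₂ + C₁ ‖u‖`. Hence for any coupling `γ` of `ν` and `ν'`,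
`|r(u)² - r(v)²| = |r u - r v| (r u + r v) ≤ C₁ ‖u - v‖ (2 C₂ + C₁ (‖u‖ + ‖v‖))`, and integrating
against `γ` with Cauchy–Schwarz gives `|R_ν(E) - R_ν'(E)| ≤ c(ν, ν') (∫ ‖u - v‖² dγ)^{1/2}`, so
`≤ c(ν, ν') W₂(ν, ν')` after taking the infimum over couplings. This bound is uniform in `E ∈ H`,
so it moves `inf_{E ∈ H} R_ν(E)` by at most `c W₂` in either direction; since
`W₂(ν_dep, ν_dep) = 0`, the difference `J(ν) - J(ν_dep)` lies in `[0, 2 c W₂]`.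
-/

theorem integral_mul_le_sqrt_mul_sqrt {α : Type*} [MeasurableSpace α] {μ : Measure α}
    {f g : α → ℝ} (hf0 : 0 ≤ᵐ[μ] f) (hg0 : 0 ≤ᵐ[μ] g) (hf : MemLp f 2 μ) (hg : MemLp g 2 μ) :
    ∫ x, f x * g x ∂μ ≤ √(∫ x, f x ^ 2 ∂μ) * √(∫ x, g x ^ 2 ∂μ) := by
  have := integral_mul_le_Lp_mul_Lq_of_nonneg Real.HolderConjugate.two_two hf0 hg0
    (by simpa using hf) (by simpa using hg)
  simp only [Real.rpow_two, one_div] at this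
  rwa [Real.sqrt_eq_rpow, Real.sqrt_eq_rpow, one_div]

theorem integral_le_sqrt_integral_sq {α : Type*} [MeasurableSpace α] {μ : Measure α}
    [IsProbabilityMeasure μ] {f : α → ℝ} (hf0 : 0 ≤ᵐ[μ] f) (hf : MemLp f 2 μ) :
    ∫ x, f x ∂μ ≤ √(∫ x, f x ^ 2 ∂μ) := by
  simpa using integral_mul_le_sqrt_mul_sqrt hf0 (ae_of_all _ fun _ => zero_le_one) hf
    (memLp_const (1 : ℝ))

theorem integral_add_sq_le {α : Type*} [MeasurableSpace α] {μ : Measure α} {f g : α → ℝ}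
    (hf : MemLp f 2 μ) (hg : MemLp g 2 μ) :
    ∫ x, (f x + g x) ^ 2 ∂μ ≤ 2 * (∫ x, f x ^ 2 ∂μ + ∫ x, g x ^ 2 ∂μ) := by
  have hf2 := hf.integrable_sq
  have hg2 := hg.integrable_sq
  calc ∫ x, (f x + g x) ^ 2 ∂μ ≤ ∫ x, (2 * f x ^ 2 + 2 * g x ^ 2) ∂μ :=
        integral_mono (hf.add hg).integrable_sq ((hf2.const_mul 2).add (hg2.const_mul 2))
          fun x => by nlinarith [sq_nonneg (f x - g x)]
    _ = 2 * (∫ x, f x ^ 2 ∂μ + ∫ x, g x ^ 2 ∂μ) := by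
        rw [integral_add (hf2.const_mul 2) (hg2.const_mul 2), integral_const_mul,
          integral_const_mul, mul_add]

theorem csInf_image_le_csInf_image_add {β : Type*} {S : Set β} (hS : S.Nonempty) {f g : β → ℝ}
    (hf : BddBelow (f '' S)) {ε : ℝ} (h : ∀ x ∈ S, f x ≤ g x + ε) :
    sInf (f '' S) ≤ sInf (g '' S) + ε := by
  rw [← sub_le_iff_le_add]
  refine le_csInf (hS.image g) ?_
  rintro _ ⟨x, hx, rfl⟩
  linarith [csInf_le hf (Set.mem_image_of_mem f hx), h x hx]

theorem abs_sq_sub_sq_le {a b δ s t C₁ C₂ : ℝ} (ha : 0 ≤ a) (hb : 0 ≤ b)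
    (hab : |a - b| ≤ C₁ * δ) (has : a ≤ C₂ + C₁ * s) (hbt : b ≤ C₂ + C₁ * t) :
    |a ^ 2 - b ^ 2| ≤ 2 * C₁ * C₂ * δ + C₁ ^ 2 * (δ * (s + t)) := by
  have hδ : 0 ≤ C₁ * δ := (abs_nonneg _).trans hab
  calc |a ^ 2 - b ^ 2| = |a - b| * (a + b) := by
        rw [sq_sub_sq, abs_mul, abs_of_nonneg (add_nonneg ha hb), mul_comm]
    _ ≤ C₁ * δ * (2 * C₂ + C₁ * (s + t)) :=
        mul_le_mul hab (by linarith) (add_nonneg ha hb) hδ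
    _ = 2 * C₁ * C₂ * δ + C₁ ^ 2 * (δ * (s + t)) := by ring

structure IsCoupling {α : Type*} [MeasurableSpace α] (γ : Measure (α × α))
    (μ μ' : Measure α) : Prop where
  isProbabilityMeasure : IsProbabilityMeasure γ
  map_fst : γ.map Prod.fst = μ
  map_snd : γ.map Prod.snd = μ'

namespace IsCoupling

variable {α E : Type*} [MeasurableSpace α] [NormedAddCommGroup E] {γ : Measure (α × α)}
  {μ μ' : Measure α}

theorem prod [IsProbabilityMeasure μ] [IsProbabilityMeasure μ'] :
    IsCoupling (μ.prod μ') μ μ' :=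
  ⟨inferInstance, by simp, by simp⟩

theorem diag [IsProbabilityMeasure μ] : IsCoupling (μ.map fun u => (u, u)) μ μ := by
  have hdiag : Measurable fun u : α => (u, u) := by fun_prop
  refine ⟨Measure.isProbabilityMeasure_map hdiag.aemeasurable, ?_, ?_⟩
  · rw [Measure.map_map measurable_fst hdiag]
    exact Measure.map_id
  · rw [Measure.map_map measurable_snd hdiag]
    exact Measure.map_id

theorem integral_fst [NormedSpace ℝ E] (h : IsCoupling γ μ μ') {f : α → E}
    (hf : AEStronglyMeasurable f μ) : ∫ p, f p.1 ∂γ = ∫ u, f u ∂μ := by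
  rw [← h.map_fst] at hf ⊢
  exact (integral_map measurable_fst.aemeasurable hf).symm

theorem integral_snd [NormedSpace ℝ E] (h : IsCoupling γ μ μ') {f : α → E}
    (hf : AEStronglyMeasurable f μ') : ∫ p, f p.2 ∂γ = ∫ u, f u ∂μ' := by
  rw [← h.map_snd] at hf ⊢
  exact (integral_map measurable_snd.aemeasurable hf).symm

theorem memLp_fst (h : IsCoupling γ μ μ') {f : α → E} {p : ENNReal} (hf : MemLp f p μ) :
    MemLp (fun q => f q.1) p γ := by
  rw [← h.map_fst] at hf
  exact hf.comp_of_map measurable_fst.aemeasurable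

theorem memLp_snd (h : IsCoupling γ μ μ') {f : α → E} {p : ENNReal} (hf : MemLp f p μ') :
    MemLp (fun q => f q.2) p γ := by
  rw [← h.map_snd] at hf
  exact hf.comp_of_map measurable_snd.aemeasurable

end IsCoupling

section Wasserstein

variable {α : Type*} [MeasurableSpace α] {d : α → α → ℝ}

theorem le_mul_W2 {μ μ' : Measure α} [IsProbabilityMeasure μ] [IsProbabilityMeasure μ']
    {A c : ℝ} (hc : 0 ≤ c) (h : ∀ γ, IsCoupling γ μ μ' → A ≤ c * √(∫ p, d p.1 p.2 ^ 2 ∂γ)) :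
    A ≤ c * W2 d μ μ' := by
  rw [W2, ← smul_eq_mul, ← Real.sInf_smul_of_nonneg hc]
  have hprod := IsCoupling.prod (μ := μ) (μ' := μ')
  refine le_csInf ⟨_, Set.smul_mem_smul_set
    ⟨_, hprod.isProbabilityMeasure, hprod.map_fst, hprod.map_snd, rfl⟩⟩ ?_
  rintro _ ⟨_, ⟨γ, hγ, h₁, h₂, rfl⟩, rfl⟩
  exact h γ ⟨hγ, h₁, h₂⟩

theorem W2_self (hd : Measurable (Function.uncurry d)) (hdiag : ∀ u, d u u = 0)
    (μ : Measure α) [IsProbabilityMeasure μ] : W2 d μ μ = 0 := by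
  have hcost : ∫ p, d p.1 p.2 ^ 2 ∂(μ.map fun u => (u, u)) = 0 := by
    rw [integral_map (φ := fun u => (u, u)) (by fun_prop)
      (f := fun p : α × α => d p.1 p.2 ^ 2) (hd.pow_const 2).aestronglyMeasurable]
    simp [hdiag]
  have hmem : (0 : ℝ) ∈ { r : ℝ | ∃ γ : Measure (α × α), IsProbabilityMeasure γ ∧
      γ.map Prod.fst = μ ∧ γ.map Prod.snd = μ ∧ r = √(∫ p, d p.1 p.2 ^ 2 ∂γ) } :=
    let h := IsCoupling.diag (μ := μ)
    ⟨_, h.isProbabilityMeasure, h.map_fst, h.map_snd, by rw [hcost, Real.sqrt_zero]⟩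
  refine le_antisymm (csInf_le ⟨0, ?_⟩ hmem) (Real.sInf_nonneg ?_) <;>
    · rintro _ ⟨γ, -, -, -, rfl⟩
      exact Real.sqrt_nonneg _

end Wasserstein

/-- The risk-shift estimate with `a` the residual norm, `N` the norm and `d` the distance on `U`. -/
theorem abs_integral_sq_sub_integral_sq_le {α : Type*} [MeasurableSpace α]
    {γ : Measure (α × α)} {ν ν' : Measure α} (hγ : IsCoupling γ ν ν')
    {a N : α → ℝ} {d : α → α → ℝ} {C₁ C₂ : ℝ} (hC₁ : 0 ≤ C₁) (hC₂ : 0 ≤ C₂)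
    (ha : Measurable a) (hd : Measurable (Function.uncurry d))
    (ha0 : ∀ u, 0 ≤ a u) (hN0 : ∀ u, 0 ≤ N u) (hd0 : ∀ u v, 0 ≤ d u v)
    (hdN : ∀ u v, d u v ≤ N u + N v) (ha_sub : ∀ u v, |a u - a v| ≤ C₁ * d u v)
    (ha_le : ∀ u, a u ≤ C₂ + C₁ * N u) (hNν : MemLp N 2 ν) (hNν' : MemLp N 2 ν') :
    |∫ u, a u ^ 2 ∂ν - ∫ u, a u ^ 2 ∂ν'| ≤
      (C₁ ^ 2 * √(2 * (∫ u, N u ^ 2 ∂ν + ∫ u, N u ^ 2 ∂ν')) + 2 * C₁ * C₂) *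
        √(∫ p, d p.1 p.2 ^ 2 ∂γ) := by
  have := hγ.isProbabilityMeasure
  have hN₁ := hγ.memLp_fst hNν
  have hN₂ := hγ.memLp_snd hNν'
  have hmemLp_a : ∀ π : α × α → α, Measurable π →
      MemLp (fun p => N (π p)) 2 γ → MemLp (fun p => a (π p)) 2 γ :=
    fun π hπ hN => ((memLp_const C₂).add (hN.const_mul C₁)).mono'
      (ha.comp hπ).aestronglyMeasurable
      (ae_of_all _ fun p => by rw [Real.norm_of_nonneg (ha0 _)]; exact ha_le _)
  have ha₁ := hmemLp_a Prod.fst measurable_fst hN₁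
  have ha₂ := hmemLp_a Prod.snd measurable_snd hN₂
  have hS : MemLp (fun p : α × α => N p.1 + N p.2) 2 γ := hN₁.add hN₂
  have hD : MemLp (fun p : α × α => d p.1 p.2) 2 γ :=
    hS.mono' hd.aestronglyMeasurable
      (ae_of_all _ fun p => by rw [Real.norm_of_nonneg (hd0 _ _)]; exact hdN _ _)
  have hS_sq : ∫ p, (N p.1 + N p.2) ^ 2 ∂γ ≤ 2 * (∫ u, N u ^ 2 ∂ν + ∫ u, N u ^ 2 ∂ν') := by
    rw [← hγ.integral_fst (f := fun u => N u ^ 2) (hNν.aestronglyMeasurable.pow 2),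
      ← hγ.integral_snd (f := fun u => N u ^ 2) (hNν'.aestronglyMeasurable.pow 2)]
    exact integral_add_sq_le hN₁ hN₂
  have hD0 : 0 ≤ᵐ[γ] fun p => d p.1 p.2 := ae_of_all _ fun p => hd0 _ _
  have hD_int : Integrable (fun p : α × α => d p.1 p.2) γ := hD.integrable one_le_two
  have hDS_int : Integrable (fun p : α × α => d p.1 p.2 * (N p.1 + N p.2)) γ :=
    hD.integrable_mul hS
  calc |∫ u, a u ^ 2 ∂ν - ∫ u, a u ^ 2 ∂ν'|
      = ‖∫ p, (a p.1 ^ 2 - a p.2 ^ 2) ∂γ‖ := by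
        rw [integral_sub ha₁.integrable_sq ha₂.integrable_sq,
          hγ.integral_fst (ha.pow_const 2).aestronglyMeasurable,
          hγ.integral_snd (ha.pow_const 2).aestronglyMeasurable, Real.norm_eq_abs]
    _ ≤ ∫ p, (2 * C₁ * C₂ * d p.1 p.2 + C₁ ^ 2 * (d p.1 p.2 * (N p.1 + N p.2))) ∂γ :=
        norm_integral_le_of_norm_le
          ((hD_int.const_mul _).add (hDS_int.const_mul _))
          (ae_of_all _ fun p => abs_sq_sub_sq_le (ha0 _) (ha0 _) (ha_sub _ _) (ha_le _) (ha_le _))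
    _ = 2 * C₁ * C₂ * ∫ p, d p.1 p.2 ∂γ + C₁ ^ 2 * ∫ p, d p.1 p.2 * (N p.1 + N p.2) ∂γ := by
        rw [integral_add (hD_int.const_mul _) (hDS_int.const_mul _), integral_const_mul,
          integral_const_mul]
    _ ≤ 2 * C₁ * C₂ * √(∫ p, d p.1 p.2 ^ 2 ∂γ) + C₁ ^ 2 *
          (√(∫ p, d p.1 p.2 ^ 2 ∂γ) * √(2 * (∫ u, N u ^ 2 ∂ν + ∫ u, N u ^ 2 ∂ν'))) := by
        gcongr
        · exact integral_le_sqrt_integral_sq hD0 hD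
        · refine (integral_mul_le_sqrt_mul_sqrt hD0 ?_ hD hS).trans ?_
          · exact ae_of_all _ fun p => add_nonneg (hN0 _) (hN0 _)
          · gcongr
    _ = _ := by ring

section ProductNorm

variable {X Θ : Type*} [NormedAddCommGroup X] [NormedAddCommGroup Θ]

theorem nU_eq_norm_toLp (u : X × Θ) : nU u = ‖WithLp.toLp 2 u‖ := by
  rw [WithLp.prod_norm_eq_of_L2]
  rfl

theorem nU_nonneg (u : X × Θ) : 0 ≤ nU u := Real.sqrt_nonneg _

theorem nU_sub_le (u v : X × Θ) : nU (u - v) ≤ nU u + nU v := by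
  simpa only [nU_eq_norm_toLp, WithLp.toLp_sub] using norm_sub_le _ _

theorem continuous_nU : Continuous (nU : X × Θ → ℝ) := by
  unfold nU
  fun_prop

theorem continuous_of_norm_sub_le_mul_nU {Y : Type*} [NormedAddCommGroup Y] {K : ℝ}
    {E : X × Θ → Y} (h : ∀ u v, ‖E u - E v‖ ≤ K * nU (u - v)) : Continuous E := by
  have hlip : LipschitzWith (Real.toNNReal K) (E ∘ WithLp.ofLp (p := 2)) :=
    LipschitzWith.of_dist_le' fun x y => by
      simpa only [Function.comp_apply, dist_eq_norm, nU_eq_norm_toLp, WithLp.toLp_sub,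
        WithLp.toLp_ofLp] using h x.ofLp y.ofLp
  exact hlip.continuous.comp (WithLp.prod_continuous_toLp 2 X Θ)

end ProductNorm

section Emulator

variable {X Θ Y : Type*} [NormedAddCommGroup X] [NormedAddCommGroup Θ] [NormedAddCommGroup Y]
  {F E : X × Θ → Y} {L R B : ℝ}

theorem zero_mem_Hclass (hR : 0 ≤ R) (hB : 0 ≤ B) : (0 : X × Θ → Y) ∈ Hclass R B :=
  ⟨fun u v => by simpa using mul_nonneg hR (nU_nonneg (u - v)), by simpa using hB⟩

theorem abs_norm_sub_sub_norm_sub_le (hF : ∀ u v, ‖F u - F v‖ ≤ L * nU (u - v))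
    (hE : ∀ u v, ‖E u - E v‖ ≤ R * nU (u - v)) (u v : X × Θ) :
    |‖F u - E u‖ - ‖F v - E v‖| ≤ (L + R) * nU (u - v) :=
  calc |‖F u - E u‖ - ‖F v - E v‖| ≤ ‖(F u - E u) - (F v - E v)‖ := abs_norm_sub_norm_le _ _
    _ = ‖(F u - F v) - (E u - E v)‖ := by congr 1; abel
    _ ≤ ‖F u - F v‖ + ‖E u - E v‖ := norm_sub_le _ _
    _ ≤ (L + R) * nU (u - v) := by linarith [hF u v, hE u v]

theorem norm_sub_le_of_mem_Hclass (hF : ∀ u v, ‖F u - F v‖ ≤ L * nU (u - v))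
    (hE : E ∈ Hclass R B) (u : X × Θ) : ‖F u - E u‖ ≤ (‖F 0‖ + B) + (L + R) * nU u := by
  have h := abs_norm_sub_sub_norm_sub_le hF hE.1 u 0
  rw [sub_zero] at h
  linarith [(abs_le.1 h).2, norm_sub_le (F 0) (E 0), hE.2]

variable [MeasurableSpace X] [MeasurableSpace Θ]

theorem risk_nonneg (ν : Measure (X × Θ)) : 0 ≤ risk F E ν :=
  integral_nonneg fun _ => sq_nonneg _

theorem cShift_nonneg (hL : 0 ≤ L) (hR : 0 ≤ R) (hB : 0 ≤ B) (F : X × Θ → Y)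
    (ν ν' : Measure (X × Θ)) : 0 ≤ cShift L R B F ν ν' := by
  unfold cShift
  have := norm_nonneg (F 0)
  positivity

theorem memLp_nU_two [OpensMeasurableSpace X] [OpensMeasurableSpace Θ]
    [SecondCountableTopologyEither X Θ] {ν : Measure (X × Θ)}
    (hν : Integrable (fun u => nU u ^ 2) ν) : MemLp nU 2 ν :=
  (memLp_two_iff_integrable_sq continuous_nU.aestronglyMeasurable).2 hν

variable [OpensMeasurableSpace X] [OpensMeasurableSpace Θ]
  [SecondCountableTopology X] [SecondCountableTopology Θ]

theorem measurable_uncurry_nU_sub : Measurable (Function.uncurry fun u v : X × Θ => nU (u - v)) :=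
  (continuous_nU.comp (continuous_fst.sub continuous_snd)).measurable

theorem abs_risk_sub_risk_le (hL : 0 ≤ L) (hR : 0 ≤ R) (hB : 0 ≤ B)
    (hF : ∀ u v, ‖F u - F v‖ ≤ L * nU (u - v)) (hE : E ∈ Hclass R B)
    {ν ν' : Measure (X × Θ)} [IsProbabilityMeasure ν] [IsProbabilityMeasure ν']
    (hν : Integrable (fun u => nU u ^ 2) ν) (hν' : Integrable (fun u => nU u ^ 2) ν') :
    |risk F E ν - risk F E ν'| ≤ cShift L R B F ν ν' * W2 (fun u v => nU (u - v)) ν ν' :=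
  le_mul_W2 (cShift_nonneg hL hR hB F ν ν') fun _ hγ =>
    abs_integral_sq_sub_integral_sq_le hγ (add_nonneg hL hR) (add_nonneg (norm_nonneg _) hB)
      ((continuous_of_norm_sub_le_mul_nU hF).sub
        (continuous_of_norm_sub_le_mul_nU hE.1)).norm.measurable
      measurable_uncurry_nU_sub (fun _ => norm_nonneg _) nU_nonneg (fun _ _ => nU_nonneg _)
      nU_sub_le      (abs_norm_sub_sub_norm_sub_le hF hE.1) (norm_sub_le_of_mem_Hclass hF hE)
      (memLp_nU_two hν) (memLp_nU_two hν')

end Emulator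

variable {X Θ Y : Type*}
  [NormedAddCommGroup X] [InnerProductSpace ℝ X] [CompleteSpace X]
  [SecondCountableTopology X] [MeasurableSpace X] [BorelSpace X]
  [NormedAddCommGroup Θ] [InnerProductSpace ℝ Θ] [CompleteSpace Θ]
  [SecondCountableTopology Θ] [MeasurableSpace Θ] [BorelSpace Θ]
  [NormedAddCommGroup Y] [InnerProductSpace ℝ Y] [CompleteSpace Y]
  [SecondCountableTopology Y]

/-- **Proposition, quantitative bound-optimality.**
For every Borel probability measure `ν` with finite second moment,
`0 ≤ J(ν) − J(ν_dep) ≤ 2 c(ν,ν_dep) W₂(ν,ν_dep)`. -/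
theorem bound_optimality_quantitative (F : X × Θ → Y) (L R B : ℝ)
    (hL : 0 ≤ L) (hR : 0 ≤ R) (hB : 0 ≤ B)
    (hF : ∀ u v : X × Θ, ‖F u - F v‖ ≤ L * nU (u - v))
    (νdep : Measure (X × Θ)) [IsProbabilityMeasure νdep]
    (hdep : Integrable (fun u => nU u ^ 2) νdep) :
    ∀ ν : Measure (X × Θ), IsProbabilityMeasure ν → Integrable (fun u => nU u ^ 2) ν →
      0 ≤ Jobj L R B F νdep ν - Jobj L R B F νdep νdep ∧
        Jobj L R B F νdep ν - Jobj L R B F νdep νdep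
          ≤ 2 * cShift L R B F ν νdep * W2 (fun u v => nU (u - v)) ν νdep := by
  intro ν _ hν
  have hH : (Hclass R B : Set (X × Θ → Y)).Nonempty := ⟨0, zero_mem_Hclass hR hB⟩
  have hbdd : ∀ μ, BddBelow ((fun E => risk F E μ) '' Hclass R B) :=
    fun μ => ⟨0, by rintro _ ⟨E, -, rfl⟩; exact risk_nonneg μ⟩
  have hrisk := fun E (hE : E ∈ Hclass R B) =>
    abs_le.1 (abs_risk_sub_risk_le hL hR hB hF hE hν hdep)
  have h₁ := csInf_image_le_csInf_image_add hH (hbdd ν) fun E hE =>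
    sub_le_iff_le_add'.1 (hrisk E hE).2
  have h₂ := csInf_image_le_csInf_image_add hH (hbdd νdep) fun E hE =>
    neg_le_sub_iff_le_add.1 (hrisk E hE).1
  have hW : W2 (fun u v => nU (u - v)) νdep νdep = 0 :=
    W2_self measurable_uncurry_nU_sub (fun u => by simp [nU]) νdep
  simp only [Jobj, hW, mul_zero, add_zero]
  constructor <;> linarith
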